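/- Let F ∈ ℝ^{n×n} have rank r, let Q₀ ∈ ℝ^{n×n} be symmetric positive definite, and let U ∈ ℝ^{n×(n−r)} satisfy Im U = ker Fᵀ. Define Λ = U(UᵀQ₀⁻¹U)⁻¹UᵀQ₀⁻¹(Fᵀ)⁺. Then for any z₀ ∈ ℝⁿ, the infimum of ((Fᵀ)⁺Fᵀz₀ − d)ᵀ Q₀⁻¹ ((Fᵀ)⁺Fᵀz₀ − d) over all d ∈ ℝⁿ with Fᵀd = 0 is attained at d = Λ(Fᵀz₀). -/

import Mathlib

/-!
With `Q = Q₀⁻¹` and `G = UᵀQU`, the matrix `P = UG⁻¹UᵀQ` is the `Q`-orthogonal projection onto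
`Im U = ker Fᵀ`, and `Λ = P (Fᵀ)⁺`, so `Λ(Fᵀz₀) = Px` for `x = (Fᵀ)⁺Fᵀz₀`. Since `UᵀQ P = UᵀQ`, the
residual `x - Px` is `Q`-orthogonal to `Im U`, and the Pythagorean identity for the form
`⟨a, b⟩ = aᵀQb` makes `Px` the point of `Im U` closest to `x`. The rank condition makes `U`
injective, which is what makes `G` positive definite, hence invertible.
-/

open Matrix

/-- `P` is the Moore–Penrose pseudoinverse of `M`. -/
def IsMoorePenrose {m n : Type*} [Fintype m] [Fintype n]
    (M : Matrix m n ℝ) (P : Matrix n m ℝ) : Prop :=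
  M * P * M = M ∧ P * M * P = P ∧ (M * P)ᵀ = M * P ∧ (P * M)ᵀ = P * M

namespace Matrix

theorem mulVec_injective_of_range_eq_ker {K m n k : Type*} [Field K] [Fintype m] [Fintype n]
    [Fintype k] (A : Matrix m n K) (U : Matrix n k K)
    (hU : ∀ d : n → K, A *ᵥ d = 0 ↔ ∃ c : k → K, U *ᵥ c = d)
    (hdim : Fintype.card k + A.rank = Fintype.card n) :
    Function.Injective U.mulVec := by
  have hrange : LinearMap.range U.mulVecLin = LinearMap.ker A.mulVecLin := by
    ext d
    exact (hU d).symm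
  have hA := A.mulVecLin.finrank_range_add_finrank_ker
  have hU' := U.mulVecLin.finrank_range_add_finrank_ker
  rw [hrange] at hU'
  rw [← rank] at hA
  simp only [Module.finrank_fintype_fun_eq_card] at hA hU'
  have hker : LinearMap.ker U.mulVecLin = ⊥ := Submodule.finrank_eq_zero.mp (by omega)
  exact LinearMap.ker_eq_bot.mp hker

variable {ι κ : Type*} [Fintype ι] [Fintype κ] [DecidableEq κ]

/-- The `Q`-orthogonal projection onto the column space of `U`. -/
noncomputable def weightedProjection (Q : Matrix ι ι ℝ) (U : Matrix ι κ ℝ) : Matrix ι ι ℝ :=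
  U * (Uᵀ * Q * U)⁻¹ * Uᵀ * Q

theorem weightedProjection_mulVec (Q : Matrix ι ι ℝ) (U : Matrix ι κ ℝ) (x : ι → ℝ) :
    weightedProjection Q U *ᵥ x = U *ᵥ (((Uᵀ * Q * U)⁻¹ * Uᵀ * Q) *ᵥ x) := by
  simp only [weightedProjection, mulVec_mulVec, Matrix.mul_assoc]

theorem transpose_mul_mul_weightedProjection {Q : Matrix ι ι ℝ} {U : Matrix ι κ ℝ}
    (hG : IsUnit (Uᵀ * Q * U).det) :
    Uᵀ * Q * weightedProjection Q U = Uᵀ * Q := by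
  calc Uᵀ * Q * weightedProjection Q U = (Uᵀ * Q * U) * (Uᵀ * Q * U)⁻¹ * (Uᵀ * Q) := by
        simp only [weightedProjection, Matrix.mul_assoc]
    _ = Uᵀ * Q := by rw [mul_nonsing_inv _ hG, Matrix.one_mul]

theorem PosSemidef.dotProduct_mulVec_le_of_orthogonal {Q : Matrix ι ι ℝ} (hQ : Q.PosSemidef)
    {a b : ι → ℝ} (hab : a ⬝ᵥ Q *ᵥ b = 0) :
    a ⬝ᵥ Q *ᵥ a ≤ (a + b) ⬝ᵥ Q *ᵥ (a + b) := by
  have hba : b ⬝ᵥ Q *ᵥ a = 0 := by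
    rw [dotProduct_mulVec, ← mulVec_transpose, ← conjTranspose_eq_transpose_of_trivial,
      hQ.isHermitian.eq, dotProduct_comm, hab]
  have hb : 0 ≤ b ⬝ᵥ Q *ᵥ b := hQ.dotProduct_mulVec_nonneg b
  rw [mulVec_add, dotProduct_add, add_dotProduct, add_dotProduct, hab, hba]
  linarith

theorem PosDef.dotProduct_mulVec_sub_weightedProjection_le {Q : Matrix ι ι ℝ} (hQ : Q.PosDef)
    {U : Matrix ι κ ℝ} (hU : Function.Injective U.mulVec) (x : ι → ℝ) (c : κ → ℝ) :
    (x - weightedProjection Q U *ᵥ x) ⬝ᵥ Q *ᵥ (x - weightedProjection Q U *ᵥ x) ≤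
      (x - U *ᵥ c) ⬝ᵥ Q *ᵥ (x - U *ᵥ c) := by
  have hG : IsUnit (Uᵀ * Q * U).det := by
    have := (hQ.conjTranspose_mul_mul_same hU).isUnit
    rwa [conjTranspose_eq_transpose_of_trivial, isUnit_iff_isUnit_det] at this
  have hQt : Qᵀ = Q := by
    rw [← conjTranspose_eq_transpose_of_trivial, hQ.isHermitian.eq]
  set r := x - weightedProjection Q U *ᵥ x
  have horth : Uᵀ *ᵥ (Q *ᵥ r) = 0 := by
    rw [mulVec_mulVec, mulVec_sub, mulVec_mulVec,
      transpose_mul_mul_weightedProjection hG, sub_self]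
  have hdecomp : x - U *ᵥ c = r + U *ᵥ (((Uᵀ * Q * U)⁻¹ * Uᵀ * Q) *ᵥ x - c) := by
    rw [mulVec_sub, ← weightedProjection_mulVec]
    exact (sub_add_sub_cancel _ _ _).symm
  rw [hdecomp]
  refine hQ.posSemidef.dotProduct_mulVec_le_of_orthogonal ?_
  rw [dotProduct_mulVec, dotProduct_mulVec, ← mulVec_transpose U, ← mulVec_transpose Q, hQt,
    horth, zero_dotProduct]

end Matrix

theorem inf_attained_at_Lambda_general
    (n r : ℕ)
    (F Q₀ : Matrix (Fin n) (Fin n) ℝ)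
    (hrank : F.rank = r)
    (hQpos : Q₀.PosDef)
    (U : Matrix (Fin n) (Fin (n - r)) ℝ)
    (hU : ∀ d : Fin n → ℝ, Fᵀ.mulVec d = 0 ↔ ∃ c : Fin (n - r) → ℝ, U.mulVec c = d)
    (Fp : Matrix (Fin n) (Fin n) ℝ)
    (Λ : Matrix (Fin n) (Fin n) ℝ)
    (hΛ : Λ = U * (Uᵀ * Q₀⁻¹ * U)⁻¹ * Uᵀ * Q₀⁻¹ * Fp)
    (z₀ : Fin n → ℝ) :
    Fᵀ.mulVec (Λ.mulVec (Fᵀ.mulVec z₀)) = 0 ∧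
    ∀ d : Fin n → ℝ, Fᵀ.mulVec d = 0 →
      (Fp.mulVec (Fᵀ.mulVec z₀) - Λ.mulVec (Fᵀ.mulVec z₀)) ⬝ᵥ
        Q₀⁻¹.mulVec (Fp.mulVec (Fᵀ.mulVec z₀) - Λ.mulVec (Fᵀ.mulVec z₀)) ≤
      (Fp.mulVec (Fᵀ.mulVec z₀) - d) ⬝ᵥ
        Q₀⁻¹.mulVec (Fp.mulVec (Fᵀ.mulVec z₀) - d) := by
  have hUinj : Function.Injective U.mulVec := by
    refine mulVec_injective_of_range_eq_ker Fᵀ U hU ?_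
    have := F.rank_le_width
    rw [rank_transpose, hrank, Fintype.card_fin, Fintype.card_fin]
    omega
  have hΛ_mulVec : ∀ v, Λ *ᵥ v = weightedProjection Q₀⁻¹ U *ᵥ (Fp *ᵥ v) := by
    intro v
    rw [hΛ, mulVec_mulVec]
    rfl
  refine ⟨?_, fun d hd => ?_⟩
  · rw [hΛ_mulVec, weightedProjection_mulVec]
    exact (hU _).2 ⟨_, rfl⟩
  · obtain ⟨c, rfl⟩ := (hU d).1 hd
    rw [hΛ_mulVec]
    exact hQpos.inv.dotProduct_mulVec_sub_weightedProjection_le hUinj _ c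

/-- The infimum of `((Fᵀ)⁺Fᵀz₀ - d)ᵀ Q₀⁻¹ ((Fᵀ)⁺Fᵀz₀ - d)` over `{d : Fᵀd = 0}`
is attained at `d = Λ(Fᵀz₀)`, where `Λ = U(UᵀQ₀⁻¹U)⁻¹UᵀQ₀⁻¹(Fᵀ)⁺`. -/
theorem inf_attained_at_Lambda
    (n r : ℕ) (hr : r ≤ n)
    (F Q₀ : Matrix (Fin n) (Fin n) ℝ)
    (hrank : F.rank = r)
    (hQsym : Q₀.IsSymm) (hQpos : Q₀.PosDef)
    (U : Matrix (Fin n) (Fin (n - r)) ℝ)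
    (hU : ∀ d : Fin n → ℝ, Fᵀ.mulVec d = 0 ↔ ∃ c : Fin (n - r) → ℝ, U.mulVec c = d)
    (Fp : Matrix (Fin n) (Fin n) ℝ) (hFp : IsMoorePenrose Fᵀ Fp)
    (Λ : Matrix (Fin n) (Fin n) ℝ)
    (hΛ : Λ = U * (Uᵀ * Q₀⁻¹ * U)⁻¹ * Uᵀ * Q₀⁻¹ * Fp)
    (z₀ : Fin n → ℝ) :
    Fᵀ.mulVec (Λ.mulVec (Fᵀ.mulVec z₀)) = 0 ∧
    ∀ d : Fin n → ℝ, Fᵀ.mulVec d = 0 →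
      (Fp.mulVec (Fᵀ.mulVec z₀) - Λ.mulVec (Fᵀ.mulVec z₀)) ⬝ᵥ
        Q₀⁻¹.mulVec (Fp.mulVec (Fᵀ.mulVec z₀) - Λ.mulVec (Fᵀ.mulVec z₀)) ≤
      (Fp.mulVec (Fᵀ.mulVec z₀) - d) ⬝ᵥ
        Q₀⁻¹.mulVec (Fp.mulVec (Fᵀ.mulVec z₀) - d) :=
  inf_attained_at_Lambda_general n r F Q₀ hrank hQpos U hU Fp Λ hΛ z₀
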